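/- In the graded q-differential algebra 𝔗(𝒜) with τ = 1⊗1 and d_q as defined by d_q(x_0⊗⋯⊗x_n) = ∑_{k=0}^n q^k x_0⊗⋯⊗1⊗x_k⊗⋯⊗x_n − q^n x_0⊗⋯⊗x_n⊗1, one has for all n ≥ 1: d_q^n(τ) = [n!]_q τ^{n+1} and d_q^n(x) = [n!]_q τ^{n−1} d_q(x) for all x ∈ 𝒜, where [n!]_q = ∏_{j=1}^n (1 + q + ⋯ + q^{j−1}). -/

import Mathlib

open scoped TensorProduct

/-- `𝔗^n(𝒜) = 𝒜^{⊗(n+1)}`. -/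
abbrev Tdeg (A : Type*) [Ring A] [Algebra ℂ A] (n : ℕ) :=
  ⨂[ℂ] _ : Fin (n + 1), A

/-- Transport along an equality of degrees. -/
noncomputable def castT (A : Type*) [Ring A] [Algebra ℂ A] {m n : ℕ} (h : m = n) :
    Tdeg A m →ₗ[ℂ] Tdeg A n :=
  (PiTensorProduct.reindex ℂ (fun _ : Fin (m + 1) => A)
    (finCongr (by omega))).toLinearMap

/-- Iterates of a degree-one family of linear maps on `𝔗(𝒜)`. -/
noncomputable def dIterT (A : Type*) [Ring A] [Algebra ℂ A]
    (d : ∀ n, Tdeg A n →ₗ[ℂ] Tdeg A (n + 1)) :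
    ∀ (m n : ℕ), Tdeg A n →ₗ[ℂ] Tdeg A (n + m)
  | 0, _ => LinearMap.id
  | m + 1, n => (d (n + m)).comp (dIterT A d m n)

noncomputable def onesT (A : Type*) [Ring A] [Algebra ℂ A] (N : ℕ) : Tdeg A N :=
  PiTensorProduct.tprod ℂ (fun _ : Fin (N + 1) => (1 : A))

noncomputable def TT (A : Type*) [Ring A] [Algebra ℂ A] (x : A) (N j : ℕ) : Tdeg A N :=
  PiTensorProduct.tprod ℂ (fun i : Fin (N + 1) => if (i : ℕ) = j then x else 1)

theorem L1 (A : Type*) [Ring A] [Algebra ℂ A] (q : ℂ)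
    (d : ∀ n, Tdeg A n →ₗ[ℂ] Tdeg A (n + 1))
    (hd : ∀ (n : ℕ) (x : Fin (n + 1) → A),
      d n (PiTensorProduct.tprod ℂ x)
        = (∑ k : Fin (n + 1), q ^ (k : ℕ) •
            PiTensorProduct.tprod ℂ (fun i : Fin (n + 2) =>
              if h : (i : ℕ) < (k : ℕ) then x ⟨i, Nat.lt_trans h k.isLt⟩
              else if h' : (i : ℕ) = (k : ℕ) then 1
              else x ⟨(i : ℕ) - 1, Nat.lt_succ_of_le (Nat.sub_le_of_le_add (Nat.le_of_lt_succ i.isLt))⟩))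
          - q ^ n • PiTensorProduct.tprod ℂ (fun i : Fin (n + 2) =>
              if h : (i : ℕ) ≤ n then x ⟨i, Nat.lt_succ_of_le h⟩ else 1))
    (N : ℕ) :
    d N (onesT A N) = (∑ k ∈ Finset.range N, q ^ k) • onesT A (N + 1) := by
  rw [onesT, hd]
  have h1 : ∀ k : Fin (N + 1),
      PiTensorProduct.tprod ℂ (fun i : Fin (N + 2) =>
        if h : (i : ℕ) < (k : ℕ) then (1 : A)
        else if h' : (i : ℕ) = (k : ℕ) then 1 else 1) = onesT A (N + 1) := by
    intro k
    rw [onesT]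
    congr 1
    funext i
    split_ifs <;> rfl
  have h2 : PiTensorProduct.tprod ℂ (fun i : Fin (N + 2) =>
      if h : (i : ℕ) ≤ N then (1 : A) else 1) = onesT A (N + 1) := by
    rw [onesT]; congr 1; funext i; split_ifs <;> rfl
  simp only [h1, h2, ← Finset.sum_smul]
  rw [← sub_smul, Fin.sum_univ_eq_sum_range, Finset.sum_range_succ]
  congr 1; ring

theorem L2 (A : Type*) [Ring A] [Algebra ℂ A] (q : ℂ)
    (d : ∀ n, Tdeg A n →ₗ[ℂ] Tdeg A (n + 1))
    (hd : ∀ (n : ℕ) (x : Fin (n + 1) → A),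
      d n (PiTensorProduct.tprod ℂ x)
        = (∑ k : Fin (n + 1), q ^ (k : ℕ) •
            PiTensorProduct.tprod ℂ (fun i : Fin (n + 2) =>
              if h : (i : ℕ) < (k : ℕ) then x ⟨i, Nat.lt_trans h k.isLt⟩
              else if h' : (i : ℕ) = (k : ℕ) then 1
              else x ⟨(i : ℕ) - 1, Nat.lt_succ_of_le (Nat.sub_le_of_le_add (Nat.le_of_lt_succ i.isLt))⟩))
          - q ^ n • PiTensorProduct.tprod ℂ (fun i : Fin (n + 2) =>
              if h : (i : ℕ) ≤ n then x ⟨i, Nat.lt_succ_of_le h⟩ else 1))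
    (x : A) (N j : ℕ) (hj : j ≤ N) :
    d N (TT A x N j)
      = (∑ k ∈ Finset.range (j + 1), q ^ k) • TT A x (N + 1) (j + 1)
        + (∑ k ∈ Finset.Icc (j + 1) N, q ^ k) • TT A x (N + 1) j
        - q ^ N • TT A x (N + 1) j := by
  rw [TT, hd]
  have h1 : ∀ k : Fin (N + 1),
      PiTensorProduct.tprod ℂ (fun i : Fin (N + 2) =>
        if h : (i : ℕ) < (k : ℕ) then (if ((⟨i, by omega⟩ : Fin (N+1)) : ℕ) = j then x else 1)
        else if h' : (i : ℕ) = (k : ℕ) then 1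
        else (if ((⟨(i : ℕ) - 1, by omega⟩ : Fin (N+1)) : ℕ) = j then x else 1))
      = if (k : ℕ) ≤ j then TT A x (N + 1) (j + 1) else TT A x (N + 1) j := by
    intro k
    by_cases hk : (k : ℕ) ≤ j
    · rw [if_pos hk, TT]
      congr 1
      funext i
      rcases lt_trichotomy (i : ℕ) (k : ℕ) with h | h | h
      · rw [dif_pos h]
        simp only []
        rw [if_neg (by omega), if_neg (by omega)]
      · rw [dif_neg (by omega), dif_pos h, if_neg (by omega)]
      · rw [dif_neg (by omega), dif_neg (by omega)]
        simp only []
        by_cases hij : (i : ℕ) = j + 1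
        · rw [if_pos (by omega), if_pos hij]
        · rw [if_neg (by omega), if_neg hij]
    · rw [if_neg hk, TT]
      congr 1
      funext i
      rcases lt_trichotomy (i : ℕ) (k : ℕ) with h | h | h
      · rw [dif_pos h]
      · rw [dif_neg (by omega), dif_pos h, if_neg (by omega)]
      · rw [dif_neg (by omega), dif_neg (by omega)]
        simp only []
        rw [if_neg (by omega), if_neg (by omega)]
  have h2 : PiTensorProduct.tprod ℂ (fun i : Fin (N + 2) =>
      if h : (i : ℕ) ≤ N then (if ((⟨i, by omega⟩ : Fin (N+1)) : ℕ) = j then x else 1) else 1)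
      = TT A x (N + 1) j := by
    rw [TT]
    congr 1
    funext i
    by_cases h : (i : ℕ) ≤ N
    · rw [dif_pos h]
    · rw [dif_neg h, if_neg (by omega)]
  simp only [h1, h2]
  rw [Fin.sum_univ_eq_sum_range (fun k => q ^ k • (if k ≤ j then TT A x (N + 1) (j + 1) else TT A x (N + 1) j))]
  rw [← Finset.sum_range_add_sum_Ico _ (by omega : j + 1 ≤ N + 1)]
  have e1 : ∑ k ∈ Finset.range (j + 1), q ^ k • (if k ≤ j then TT A x (N + 1) (j + 1) else TT A x (N + 1) j)
      = (∑ k ∈ Finset.range (j + 1), q ^ k) • TT A x (N + 1) (j + 1) := by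
    rw [Finset.sum_smul]
    refine Finset.sum_congr rfl fun k hk => ?_
    rw [if_pos (by simp at hk; omega)]
  have e2 : ∑ k ∈ Finset.Ico (j + 1) (N + 1), q ^ k • (if k ≤ j then TT A x (N + 1) (j + 1) else TT A x (N + 1) j)
      = (∑ k ∈ Finset.Icc (j + 1) N, q ^ k) • TT A x (N + 1) j := by
    rw [Finset.sum_smul, ← Finset.Ico_add_one_right_eq_Icc]
    refine Finset.sum_congr rfl fun k hk => ?_
    rw [if_neg (by simp [Finset.mem_Ico] at hk; omega)]
  rw [e1, e2]

theorem L3 (A : Type*) [Ring A] [Algebra ℂ A] (q : ℂ)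
    (d : ∀ n, Tdeg A n →ₗ[ℂ] Tdeg A (n + 1))
    (hd : ∀ (n : ℕ) (x : Fin (n + 1) → A),
      d n (PiTensorProduct.tprod ℂ x)
        = (∑ k : Fin (n + 1), q ^ (k : ℕ) •
            PiTensorProduct.tprod ℂ (fun i : Fin (n + 2) =>
              if h : (i : ℕ) < (k : ℕ) then x ⟨i, Nat.lt_trans h k.isLt⟩
              else if h' : (i : ℕ) = (k : ℕ) then 1
              else x ⟨(i : ℕ) - 1, Nat.lt_succ_of_le (Nat.sub_le_of_le_add (Nat.le_of_lt_succ i.isLt))⟩))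
          - q ^ n • PiTensorProduct.tprod ℂ (fun i : Fin (n + 2) =>
              if h : (i : ℕ) ≤ n then x ⟨i, Nat.lt_succ_of_le h⟩ else 1))
    (x : A) (N a : ℕ) (ha : a + 1 = N) :
    d N (TT A x N (a + 1) - TT A x N a)
      = (∑ k ∈ Finset.range (a + 2), q ^ k) •
          (TT A x (N + 1) (a + 2) - TT A x (N + 1) (a + 1)) := by
  subst ha
  rw [map_sub, L2 A q d hd x (a + 1) (a + 1) le_rfl, L2 A q d hd x (a + 1) a (by omega)]
  rw [show Finset.Icc (a + 1 + 1) (a + 1) = ∅ from Finset.Icc_eq_empty (by omega)]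
  simp only [Finset.Icc_self, Finset.sum_singleton, Finset.sum_empty, zero_smul, add_zero]
  rw [smul_sub, Finset.sum_range_succ, add_smul, add_smul]
  abel

theorem S1 (A : Type*) [Ring A] [Algebra ℂ A] (q : ℂ)
    (d : ∀ n, Tdeg A n →ₗ[ℂ] Tdeg A (n + 1))
    (hd : ∀ (n : ℕ) (x : Fin (n + 1) → A),
      d n (PiTensorProduct.tprod ℂ x)
        = (∑ k : Fin (n + 1), q ^ (k : ℕ) •
            PiTensorProduct.tprod ℂ (fun i : Fin (n + 2) =>
              if h : (i : ℕ) < (k : ℕ) then x ⟨i, Nat.lt_trans h k.isLt⟩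
              else if h' : (i : ℕ) = (k : ℕ) then 1
              else x ⟨(i : ℕ) - 1, Nat.lt_succ_of_le (Nat.sub_le_of_le_add (Nat.le_of_lt_succ i.isLt))⟩))
          - q ^ n • PiTensorProduct.tprod ℂ (fun i : Fin (n + 2) =>
              if h : (i : ℕ) ≤ n then x ⟨i, Nat.lt_succ_of_le h⟩ else 1))
    (m : ℕ) :
    dIterT A d m 1 (onesT A 1)
      = (∏ j ∈ Finset.Icc 1 m, ∑ i ∈ Finset.range j, q ^ i) • onesT A (1 + m) := by
  induction m with
  | zero => simp [dIterT]
  | succ m ih =>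
    have hstep : dIterT A d (m + 1) 1 (onesT A 1)
        = d (1 + m) (dIterT A d m 1 (onesT A 1)) := rfl
    rw [hstep, ih, map_smul, L1 A q d hd (1 + m), smul_smul]
    show _ = (∏ j ∈ Finset.Icc 1 (m + 1), ∑ i ∈ Finset.range j, q ^ i) • onesT A (1 + m + 1)
    congr 1
    rw [Finset.prod_Icc_succ_top (by omega), Nat.add_comm 1 m]

theorem S2 (A : Type*) [Ring A] [Algebra ℂ A] (q : ℂ)
    (d : ∀ n, Tdeg A n →ₗ[ℂ] Tdeg A (n + 1))
    (hd : ∀ (n : ℕ) (x : Fin (n + 1) → A),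
      d n (PiTensorProduct.tprod ℂ x)
        = (∑ k : Fin (n + 1), q ^ (k : ℕ) •
            PiTensorProduct.tprod ℂ (fun i : Fin (n + 2) =>
              if h : (i : ℕ) < (k : ℕ) then x ⟨i, Nat.lt_trans h k.isLt⟩
              else if h' : (i : ℕ) = (k : ℕ) then 1
              else x ⟨(i : ℕ) - 1, Nat.lt_succ_of_le (Nat.sub_le_of_le_add (Nat.le_of_lt_succ i.isLt))⟩))
          - q ^ n • PiTensorProduct.tprod ℂ (fun i : Fin (n + 2) =>
              if h : (i : ℕ) ≤ n then x ⟨i, Nat.lt_succ_of_le h⟩ else 1))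
    (x : A) (m : ℕ) :
    dIterT A d (m + 1) 0 (TT A x 0 0)
      = (∏ j ∈ Finset.Icc 1 (m + 1), ∑ i ∈ Finset.range j, q ^ i) •
          (TT A x (0 + (m + 1)) (m + 1) - TT A x (0 + (m + 1)) m) := by
  induction m with
  | zero =>
    have hstep : dIterT A d 1 0 (TT A x 0 0) = d 0 (TT A x 0 0) := rfl
    rw [hstep, L2 A q d hd x 0 0 le_rfl]
    rw [show Finset.Icc 1 0 = ∅ from rfl]
    simp
  | succ m ih =>
    have hstep : dIterT A d (m + 1 + 1) 0 (TT A x 0 0)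
        = d (0 + (m + 1)) (dIterT A d (m + 1) 0 (TT A x 0 0)) := rfl
    rw [hstep, ih, map_smul,
      L3 A q d hd x (0 + (m + 1)) m (by omega), smul_smul]
    show _ = (∏ j ∈ Finset.Icc 1 (m + 1 + 1), ∑ i ∈ Finset.range j, q ^ i) •
        (TT A x (0 + (m + 1) + 1) (m + 1 + 1) - TT A x (0 + (m + 1) + 1) (m + 1))
    congr 1
    rw [Finset.prod_Icc_succ_top (show 1 ≤ m + 1 + 1 by omega),
      Finset.prod_Icc_succ_top (show 1 ≤ m + 1 by omega)]

theorem castC (A : Type*) [Ring A] [Algebra ℂ A] (x : A) {M N : ℕ} (h : M = N) (j : ℕ) :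
    castT A h (TT A x M j) = TT A x N j := by
  subst h
  simp only [castT, TT, LinearEquiv.coe_coe, PiTensorProduct.reindex_tprod]
  congr 1

theorem castO (A : Type*) [Ring A] [Algebra ℂ A] {M N : ℕ} (h : M = N) :
    castT A h (onesT A M) = onesT A N := by
  subst h
  simp only [castT, onesT, LinearEquiv.coe_coe, PiTensorProduct.reindex_tprod]

theorem M1 (A : Type*) [Ring A] [Algebra ℂ A] (x : A)
    (mul : ∀ m n, Tdeg A m →ₗ[ℂ] Tdeg A n →ₗ[ℂ] Tdeg A (m + n))
    (hmul : ∀ (m n : ℕ) (x : Fin (m + 1) → A) (y : Fin (n + 1) → A),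
      mul m n (PiTensorProduct.tprod ℂ x) (PiTensorProduct.tprod ℂ y)
        = PiTensorProduct.tprod ℂ (fun i : Fin (m + n + 1) =>
            if h : (i : ℕ) < m then x ⟨i, Nat.lt_succ_of_lt h⟩
            else if h' : (i : ℕ) = m then x (Fin.last m) * y 0
            else y ⟨(i : ℕ) - m, Nat.sub_lt_left_of_lt_add (Nat.le_of_not_lt h) i.isLt⟩))
    (M : ℕ) :
    mul M 1 (onesT A M) (TT A x 1 1) = TT A x (M + 1) (M + 1) := by
  rw [onesT, TT, TT, hmul]
  congr 1
  funext i
  rcases lt_trichotomy (i : ℕ) M with h | h | h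
  · rw [dif_pos h, if_neg (by omega)]
  · rw [dif_neg (by omega), dif_pos h]
    simp [h]
  · rw [dif_neg (by omega), dif_neg (by omega)]
    simp only []
    have hi : (i : ℕ) = M + 1 := by omega
    rw [if_pos (by omega), if_pos hi]

theorem M0 (A : Type*) [Ring A] [Algebra ℂ A] (x : A)
    (mul : ∀ m n, Tdeg A m →ₗ[ℂ] Tdeg A n →ₗ[ℂ] Tdeg A (m + n))
    (hmul : ∀ (m n : ℕ) (x : Fin (m + 1) → A) (y : Fin (n + 1) → A),
      mul m n (PiTensorProduct.tprod ℂ x) (PiTensorProduct.tprod ℂ y)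
        = PiTensorProduct.tprod ℂ (fun i : Fin (m + n + 1) =>
            if h : (i : ℕ) < m then x ⟨i, Nat.lt_succ_of_lt h⟩
            else if h' : (i : ℕ) = m then x (Fin.last m) * y 0
            else y ⟨(i : ℕ) - m, Nat.sub_lt_left_of_lt_add (Nat.le_of_not_lt h) i.isLt⟩))
    (M : ℕ) :
    mul M 1 (onesT A M) (TT A x 1 0) = TT A x (M + 1) M := by
  rw [onesT, TT, TT, hmul]
  congr 1
  funext i
  rcases lt_trichotomy (i : ℕ) M with h | h | h
  · rw [dif_pos h, if_neg (by omega)]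
  · rw [dif_neg (by omega), dif_pos h]
    simp [h]
  · rw [dif_neg (by omega), dif_neg (by omega)]
    simp only []
    rw [if_neg (by omega), if_neg (by omega)]

/-- in `𝔗(𝒜)` with `τ = 1⊗1` and the `q`-differential `d_q`
determined by insertion of the unit, one has for all `n ≥ 1`:
`d_q^n(τ) = [n!]_q τ^{n+1}` (the all-ones tensor of degree `n+1`) and
`d_q^n(x) = [n!]_q τ^{n-1} d_q(x)` for all `x ∈ 𝒜`, where
`[n!]_q = ∏_{j=1}^n (1 + q + ⋯ + q^{j-1})`. -/
theorem tensor_algebra_dq_iterates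
    (A : Type*) [Ring A] [Algebra ℂ A]
    (q : ℂ) (hq0 : q ≠ 0) (hq1 : q ≠ 1)
    (mul : ∀ m n, Tdeg A m →ₗ[ℂ] Tdeg A n →ₗ[ℂ] Tdeg A (m + n))
    (hmul : ∀ (m n : ℕ) (x : Fin (m + 1) → A) (y : Fin (n + 1) → A),
      mul m n (PiTensorProduct.tprod ℂ x) (PiTensorProduct.tprod ℂ y)
        = PiTensorProduct.tprod ℂ (fun i : Fin (m + n + 1) =>
            if h : (i : ℕ) < m then x ⟨i, by omega⟩
            else if h' : (i : ℕ) = m then x (Fin.last m) * y 0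
            else y ⟨(i : ℕ) - m, by omega⟩))
    (d : ∀ n, Tdeg A n →ₗ[ℂ] Tdeg A (n + 1))
    (hd : ∀ (n : ℕ) (x : Fin (n + 1) → A),
      d n (PiTensorProduct.tprod ℂ x)
        = (∑ k : Fin (n + 1), q ^ (k : ℕ) •
            PiTensorProduct.tprod ℂ (fun i : Fin (n + 2) =>
              if h : (i : ℕ) < (k : ℕ) then x ⟨i, by omega⟩
              else if h' : (i : ℕ) = (k : ℕ) then 1
              else x ⟨(i : ℕ) - 1, by omega⟩))
          - q ^ n • PiTensorProduct.tprod ℂ (fun i : Fin (n + 2) =>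
              if h : (i : ℕ) ≤ n then x ⟨i, by omega⟩ else 1))
    (n : ℕ) (hn : 1 ≤ n) :
    castT A (by omega : 1 + n = n + 1)
        (dIterT A d n 1 (PiTensorProduct.tprod ℂ (fun _ : Fin 2 => (1 : A))))
      = (∏ j ∈ Finset.Icc 1 n, ∑ i ∈ Finset.range j, q ^ i) •
          PiTensorProduct.tprod ℂ (fun _ : Fin (n + 2) => (1 : A)) ∧
    ∀ x : A,
      castT A (by omega : 0 + n = n)
          (dIterT A d n 0 (PiTensorProduct.tprod ℂ (fun _ : Fin 1 => x)))
        = (∏ j ∈ Finset.Icc 1 n, ∑ i ∈ Finset.range j, q ^ i) •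
            castT A (by omega : (n - 1) + 1 = n)
              (mul (n - 1) 1
                (PiTensorProduct.tprod ℂ (fun _ : Fin ((n - 1) + 1) => (1 : A)))
                (d 0 (PiTensorProduct.tprod ℂ (fun _ : Fin 1 => x)))) := by
  constructor
  · rw [show (PiTensorProduct.tprod ℂ (fun _ : Fin 2 => (1 : A))) = onesT A 1 from rfl]
    rw [S1 A q d hd n, map_smul, castO A (by omega : 1 + n = n + 1)]
    rfl
  · intro x
    obtain ⟨m, rfl⟩ : ∃ m, n = m + 1 := ⟨n - 1, by omega⟩
    have hx : (PiTensorProduct.tprod ℂ (fun _ : Fin 1 => x)) = TT A x 0 0 := by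
      rw [TT]
      congr 1
      funext i
      rw [if_pos (by omega)]
    rw [hx, S2 A q d hd x m, map_smul, map_sub,
      castC A x (by omega : 0 + (m + 1) = m + 1) (m + 1),
      castC A x (by omega : 0 + (m + 1) = m + 1) m]
    have hd0 : d 0 (TT A x 0 0) = TT A x 1 1 - TT A x 1 0 := by
      rw [L2 A q d hd x 0 0 le_rfl]
      rw [show Finset.Icc 1 0 = ∅ from rfl]
      simp
    rw [show (PiTensorProduct.tprod ℂ (fun _ : Fin ((m + 1 - 1) + 1) => (1 : A)))
        = onesT A (m + 1 - 1) from rfl]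
    rw [hd0, map_sub, M1 A x mul hmul (m + 1 - 1), M0 A x mul hmul (m + 1 - 1),
      map_sub, castC A x (by omega : (m + 1 - 1) + 1 = m + 1) ((m + 1 - 1) + 1),
      castC A x (by omega : (m + 1 - 1) + 1 = m + 1) (m + 1 - 1)]
    rw [show m + 1 - 1 = m from rfl]
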